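/- Let N, M be positive integers, p : Fin N → ℝ³ vertex positions, and t : Fin M → Fin 3 → Fin N vertex indices of triangles such that: (i) for each triangle k, the points v₁ᵏ = p(t k 0), v₂ᵏ = p(t k 1), v₃ᵏ = p(t k 2) are affinely independent, and (ii) every vertex index i ∈ Fin N occurs as t k j for some k, j. For each k set e₁ᵏ = v₃ᵏ − v₂ᵏ, e₂ᵏ = v₁ᵏ − v₃ᵏ, e₃ᵏ = v₂ᵏ − v₁ᵏ, uᵏ = e₂ᵏ × e₃ᵏ, area a_k = ½‖uᵏ‖, unit normal n_k = uᵏ/‖uᵏ‖, centroid c_k = (v₁ᵏ+v₂ᵏ+v₃ᵏ)/3, and for f : Fin N → ℝ the discrete gradient G_k(f) = (uᵏ × (f₁ᵏ e₁ᵏ + f₂ᵏ e₂ᵏ + f₃ᵏ e₃ᵏ))/‖uᵏ‖² where fᵢᵏ = f(t k (i−1)), and the centroid value φ_k(f) = (f₁ᵏ+f₂ᵏ+f₃ᵏ)/3. Given target data w : Fin P → ℝ³, m : Fin P → ℝ³ unit vectors, b : Fin P → ℝ with b_j > 0, g : Fin P → ℝ, and γ_W > 0, define the discrete BV matching energy E(f)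 = Σ_k ∫_{T_k} |f₁ᵏ + ⟨G_k(f), x − v₁ᵏ⟩| dH²(x) + Σ_k a_k ‖G_k(f)‖ + (γ_W/2)[ Σ_{k,l} a_k a_l k((c_k,n_k,φ_k(f)),(c_l,n_l,φ_l(f))) − 2 Σ_{k,j} a_k b_j k((c_k,n_k,φ_k(f)),(w_j,m_j,g_j)) + Σ_{j,j'} b_j b_{j'} k((w_j,m_j,g_j),(w_{j'},m_{j'},g_{j'})) ], where T_k is the convex hull of {v₁ᵏ,v₂ᵏ,v₃ᵏ}. Then E attains its infimum over all f : Fin N → ℝ. -/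

import Mathlib

/-!
Split the energy as `E = Φ + R`, where `Φ` collects the `L¹` and total variation terms and `R`
is the varifold attachment term. `Φ` is continuous, positively homogeneous and vanishes only at
`0`: if it vanishes, the gradient is `0` on every triangle, so the interpolant is constant there,
and the `L¹` term forces that constant to be `0` because a nondegenerate triangle has positive
finite `H²` measure; every vertex lies on some triangle. Compactness of the unit sphere then
gives `Φ f ≥ c ‖f‖` with `c > 0`. The signal enters the Gaussian kernel only through a factor in
`(0, 1]`, so `R` is bounded. Hence `E` is continuous and coercive, and attains its minimum.
-/

open MeasureTheory Filter Topology
open scoped RealInnerProductSpace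

noncomputable section

/-- The 3-dimensional Euclidean space in which the fshapes live. -/
abbrev E3 := EuclideanSpace ℝ (Fin 3)

/-- The cross product on `ℝ³`. -/
def cross3 (u v : E3) : E3 :=
  (WithLp.equiv 2 (Fin 3 → ℝ)).symm
    ![u 1 * v 2 - u 2 * v 1, u 2 * v 0 - u 0 * v 2, u 0 * v 1 - u 1 * v 0]

/-- The Gaussian kernel on `ℝ³ × ℝ³ × ℝ` with parameters `σe, σt, σf`. -/
def kern (σe σt σf : ℝ) (p q : E3 × E3 × ℝ) : ℝ :=
  Real.exp (-‖p.1 - q.1‖ ^ 2 / σe ^ 2) *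
    Real.exp (-(2 * (1 - ⟪p.2.1, q.2.1⟫ ^ 2)) / σt ^ 2) *
    Real.exp (-(p.2.2 - q.2.2) ^ 2 / σf ^ 2)

/-- `uᵏ = e₂ᵏ × e₃ᵏ` where `e₂ᵏ = v₁ − v₃` and `e₃ᵏ = v₂ − v₁`. -/
def triU (v₁ v₂ v₃ : E3) : E3 := cross3 (v₁ - v₃) (v₂ - v₁)

/-- The area `a_k = ½‖uᵏ‖` of the triangle with vertices `v₁ v₂ v₃`. -/
def triArea (v₁ v₂ v₃ : E3) : ℝ := ‖triU v₁ v₂ v₃‖ / 2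

/-- The unit normal `n_k = uᵏ/‖uᵏ‖` of the triangle with vertices `v₁ v₂ v₃`. -/
def triNormal (v₁ v₂ v₃ : E3) : E3 := ‖triU v₁ v₂ v₃‖⁻¹ • triU v₁ v₂ v₃

/-- The centroid `c_k = (v₁+v₂+v₃)/3` of the triangle with vertices `v₁ v₂ v₃`. -/
def triCentroid (v₁ v₂ v₃ : E3) : E3 := (3 : ℝ)⁻¹ • (v₁ + v₂ + v₃)

/-- The discrete (constant) gradient
`G_k(f) = (uᵏ × (f₁ e₁ᵏ + f₂ e₂ᵏ + f₃ e₃ᵏ))/‖uᵏ‖²` of the affine interpolant of the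
values `f₁ f₂ f₃` at the vertices `v₁ v₂ v₃`. -/
def triGrad (v₁ v₂ v₃ : E3) (f₁ f₂ f₃ : ℝ) : E3 :=
  (‖triU v₁ v₂ v₃‖ ^ 2)⁻¹ •
    cross3 (triU v₁ v₂ v₃) (f₁ • (v₃ - v₂) + f₂ • (v₁ - v₃) + f₃ • (v₂ - v₁))

open Set
open scoped Matrix ENNReal

section Simplex

lemma AffineIndependent.linearIndependent_succ_sub_zero {V : Type*} [AddCommGroup V] [Module ℝ V]
    {n : ℕ} {p : Fin (n + 1) → V} (hp : AffineIndependent ℝ p) :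
    LinearIndependent ℝ fun i : Fin n => p i.succ - p 0 :=
  ((affineIndependent_iff_linearIndependent_vsub ℝ p 0).1 hp).comp
    (fun i => ⟨i.succ, i.succ_ne_zero⟩) fun _ _ h => Fin.succ_injective _ (congrArg Subtype.val h)

def cornerSimplex (n : ℕ) : Set (Fin n → ℝ) :=
  convexHull ℝ (range (Fin.cons 0 (Pi.basisFun ℝ (Fin n))))

lemma hausdorffMeasure_cornerSimplex_pos (n : ℕ) : 0 < μH[n] (cornerSimplex n) := by
  -- `μH[finrank ℝ E]` is an additive Haar measure on `E`.
  have hn : (n : ℝ) = (Module.finrank ℝ (Fin n → ℝ) : ℕ) := by simp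
  rw [hn]
  refine Measure.measure_pos_of_nonempty_interior _ ?_
  rw [cornerSimplex, interior_convexHull_nonempty_iff_affineSpan_eq_top,
    ← AffineSubspace.coe_eq_univ_iff, Fin.range_cons, affineSpan_insert_zero,
    Module.Basis.span_eq, Submodule.top_coe]

lemma hausdorffMeasure_cornerSimplex_lt_top (n : ℕ) : μH[n] (cornerSimplex n) < ∞ := by
  have hn : (n : ℝ) = (Module.finrank ℝ (Fin n → ℝ) : ℕ) := by simp
  rw [hn]
  exact ((finite_range _).isCompact_convexHull ℝ).measure_lt_top

variable {V : Type*} [NormedAddCommGroup V] [NormedSpace ℝ V] {n : ℕ}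

def simplexChart (p : Fin (n + 1) → V) : (Fin n → ℝ) →ᵃ[ℝ] V :=
  (Fintype.linearCombination ℝ fun i => p i.succ - p 0).toAffineMap + AffineMap.const ℝ _ (p 0)

lemma simplexChart_apply (p : Fin (n + 1) → V) (q : Fin n → ℝ) :
    simplexChart p q = ∑ i, q i • (p i.succ - p 0) + p 0 := by
  simp [simplexChart, Fintype.linearCombination_apply]

lemma simplexChart_image_cornerSimplex (p : Fin (n + 1) → V) :
    simplexChart p '' cornerSimplex n = convexHull ℝ (range p) := by
  have hcomp : simplexChart p ∘ Fin.cons 0 (Pi.basisFun ℝ (Fin n)) = p := by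
    ext i
    refine Fin.cases ?_ (fun i => ?_) i <;> simp [simplexChart_apply, Pi.single_apply]
  rw [cornerSimplex, AffineMap.image_convexHull, ← range_comp, hcomp]

lemma simplexChart_injective {p : Fin (n + 1) → V} (hp : AffineIndependent ℝ p) :
    Function.Injective (simplexChart p) := fun x y h => by
  rw [simplexChart_apply, simplexChart_apply, add_left_inj] at h
  exact hp.linearIndependent_succ_sub_zero.fintypeLinearCombination_injective
    (by simpa [Fintype.linearCombination_apply] using h)

lemma exists_lipschitzWith_simplexChart (p : Fin (n + 1) → V) :
    ∃ K, LipschitzWith K (simplexChart p) := by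
  set L := LinearMap.toContinuousLinearMap
    (Fintype.linearCombination ℝ fun i : Fin n => p i.succ - p 0)
  refine ⟨‖L‖₊, LipschitzWith.of_dist_le_mul fun x y => ?_⟩
  simpa [simplexChart_apply, dist_add_right, L, Fintype.linearCombination_apply]
    using L.lipschitz.dist_le_mul x y

variable [MeasurableSpace V] [BorelSpace V]

lemma hausdorffMeasure_convexHull_range_lt_top (p : Fin (n + 1) → V) :
    μH[n] (convexHull ℝ (range p)) < ∞ := by
  obtain ⟨K, hK⟩ := exists_lipschitzWith_simplexChart p
  rw [← simplexChart_image_cornerSimplex]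
  exact (hK.hausdorffMeasure_image_le (Nat.cast_nonneg n) _).trans_lt
    (ENNReal.mul_lt_top (by simp) (hausdorffMeasure_cornerSimplex_lt_top n))

lemma AffineIndependent.hausdorffMeasure_convexHull_pos {p : Fin (n + 1) → V}
    (hp : AffineIndependent ℝ p) : 0 < μH[n] (convexHull ℝ (range p)) := by
  obtain ⟨K, hK⟩ := AffineMap.antilipschitzWith_of_finiteDimensional (simplexChart_injective hp)
  have hle := hK.le_hausdorffMeasure_image (Nat.cast_nonneg n) (cornerSimplex n)
  rw [simplexChart_image_cornerSimplex] at hle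
  refine pos_iff_ne_zero.2 fun h => (hausdorffMeasure_cornerSimplex_pos n).ne' ?_
  rwa [h, mul_zero, nonpos_iff_eq_zero] at hle

lemma range_fin_three {α : Type*} (v : Fin 3 → α) : range v = {v 0, v 1, v 2} := by
  rw [Fin.range_fin_succ, Fin.range_fin_succ, Fin.range_fin_succ, range_eq_empty, insert_empty_eq]
  rfl

lemma hausdorffMeasure_triangle_lt_top (v : Fin 3 → V) :
    μH[2] (convexHull ℝ {v 0, v 1, v 2}) < ∞ := by
  simpa [range_fin_three] using hausdorffMeasure_convexHull_range_lt_top v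

lemma AffineIndependent.hausdorffMeasure_triangle_pos {v : Fin 3 → V}
    (hv : AffineIndependent ℝ v) : 0 < μH[2] (convexHull ℝ {v 0, v 1, v 2}) := by
  simpa [range_fin_three] using hv.hausdorffMeasure_convexHull_pos

end Simplex

section Coordinates

lemma cross3_eq_toLp_cross (u v : E3) :
    cross3 u v = WithLp.toLp 2 (WithLp.ofLp u ⨯₃ WithLp.ofLp v) := rfl

lemma cross3_apply (u v : E3) (i : Fin 3) :
    cross3 u v i =
      ![u 1 * v 2 - u 2 * v 1, u 2 * v 0 - u 0 * v 2, u 0 * v 1 - u 1 * v 0] i := rfl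

lemma cross3_smul_right (u v : E3) (r : ℝ) : cross3 u (r • v) = r • cross3 u v := by
  simp [cross3_eq_toLp_cross]

@[fun_prop]
lemma Continuous.cross3 {α : Type*} [TopologicalSpace α] {u v : α → E3} (hu : Continuous u)
    (hv : Continuous v) : Continuous fun a => cross3 (u a) (v a) := by
  refine (PiLp.continuous_toLp 2 _).comp (continuous_pi fun i => ?_)
  fin_cases i <;> fun_prop

lemma E3.inner_apply (x y : E3) : ⟪x, y⟫ = x 0 * y 0 + x 1 * y 1 + x 2 * y 2 := by
  simp [PiLp.inner_apply, Fin.sum_univ_three, mul_comm]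

lemma E3.norm_sq_eq (x : E3) : ‖x‖ ^ 2 = x 0 ^ 2 + x 1 ^ 2 + x 2 ^ 2 := by
  rw [← real_inner_self_eq_norm_sq, E3.inner_apply]; ring

end Coordinates

section Triangle

lemma triU_eq_cross3 (v₁ v₂ v₃ : E3) : triU v₁ v₂ v₃ = cross3 (v₂ - v₁) (v₃ - v₁) := by
  ext i; fin_cases i <;> simp [triU, cross3_apply] <;> ring

lemma triU_ne_zero {v : Fin 3 → E3} (hv : AffineIndependent ℝ v) :
    triU (v 0) (v 1) (v 2) ≠ 0 := by
  have hli := hv.linearIndependent_succ_sub_zero.map'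
    (WithLp.linearEquiv 2 ℝ (Fin 3 → ℝ)).toLinearMap (LinearEquiv.ker _)
  have hfam : ![WithLp.ofLp (v 1 - v 0), WithLp.ofLp (v 2 - v 0)] =
      (WithLp.linearEquiv 2 ℝ (Fin 3 → ℝ)).toLinearMap ∘ fun i : Fin 2 => v i.succ - v 0 := by
    ext i : 1; fin_cases i <;> rfl
  rw [triU_eq_cross3, cross3_eq_toLp_cross, Ne, WithLp.toLp_eq_zero, ← Ne,
    crossProduct_ne_zero_iff_linearIndependent, hfam]
  exact hli

lemma triArea_pos {v : Fin 3 → E3} (hv : AffineIndependent ℝ v) :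
    0 < triArea (v 0) (v 1) (v 2) :=
  div_pos (norm_pos_iff.2 (triU_ne_zero hv)) two_pos

lemma triGrad_smul (v₁ v₂ v₃ : E3) (r f₁ f₂ f₃ : ℝ) :
    triGrad v₁ v₂ v₃ (r * f₁) (r * f₂) (r * f₃) = r • triGrad v₁ v₂ v₃ f₁ f₂ f₃ := by
  have : (r * f₁) • (v₃ - v₂) + (r * f₂) • (v₁ - v₃) + (r * f₃) • (v₂ - v₁) =
      r • (f₁ • (v₃ - v₂) + f₂ • (v₁ - v₃) + f₃ • (v₂ - v₁)) := by module
  rw [triGrad, triGrad, this, cross3_smul_right, smul_comm]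

@[fun_prop]
lemma Continuous.triGrad {α : Type*} [TopologicalSpace α] (v₁ v₂ v₃ : E3) {f₁ f₂ f₃ : α → ℝ}
    (h₁ : Continuous f₁) (h₂ : Continuous f₂) (h₃ : Continuous f₃) :
    Continuous fun a => triGrad v₁ v₂ v₃ (f₁ a) (f₂ a) (f₃ a) := by
  unfold _root_.triGrad; fun_prop

lemma inner_triGrad_sub {v₁ v₂ v₃ : E3} (h : triU v₁ v₂ v₃ ≠ 0) (f₁ f₂ f₃ : ℝ) :
    ⟪triGrad v₁ v₂ v₃ f₁ f₂ f₃, v₂ - v₁⟫ = f₂ - f₁ ∧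
      ⟪triGrad v₁ v₂ v₃ f₁ f₂ f₃, v₃ - v₁⟫ = f₃ - f₁ := by
  set u := triU v₁ v₂ v₃
  set w := f₁ • (v₃ - v₂) + f₂ • (v₁ - v₃) + f₃ • (v₂ - v₁)
  have hu : ‖u‖ ^ 2 ≠ 0 := by positivity
  have key : ⟪cross3 u w, v₂ - v₁⟫ = (f₂ - f₁) * ‖u‖ ^ 2 ∧
      ⟪cross3 u w, v₃ - v₁⟫ = (f₃ - f₁) * ‖u‖ ^ 2 := by
    constructor <;> simp only [E3.inner_apply, E3.norm_sq_eq, u, w, triU, cross3_apply,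
      PiLp.sub_apply, PiLp.add_apply, PiLp.smul_apply, smul_eq_mul, Matrix.cons_val] <;> ring
  rw [triGrad, real_inner_smul_left, real_inner_smul_left, key.1, key.2, ← div_eq_inv_mul,
    ← div_eq_inv_mul]
  exact ⟨mul_div_cancel_right₀ _ hu, mul_div_cancel_right₀ _ hu⟩

end Triangle

section P1BVEnergy

def triBV (v : Fin 3 → E3) (y : Fin 3 → ℝ) : ℝ :=
  (∫ x in convexHull ℝ {v 0, v 1, v 2},
      |y 0 + ⟪triGrad (v 0) (v 1) (v 2) (y 0) (y 1) (y 2), x - v 0⟫| ∂μH[2]) +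
    triArea (v 0) (v 1) (v 2) * ‖triGrad (v 0) (v 1) (v 2) (y 0) (y 1) (y 2)‖

lemma triBV_nonneg (v : Fin 3 → E3) (y : Fin 3 → ℝ) : 0 ≤ triBV v y :=
  add_nonneg (integral_nonneg fun _ => abs_nonneg _)
    (mul_nonneg (div_nonneg (norm_nonneg _) zero_le_two) (norm_nonneg _))

lemma triBV_smul (v : Fin 3 → E3) (r : ℝ) (y : Fin 3 → ℝ) :
    triBV v (r • y) = |r| * triBV v y := by
  simp only [triBV, Pi.smul_apply, smul_eq_mul, triGrad_smul, real_inner_smul_left, ← mul_add,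
    abs_mul, integral_const_mul, norm_smul, Real.norm_eq_abs]
  ring

lemma continuous_triBV (v : Fin 3 → E3) : Continuous (triBV v) := by
  set T := convexHull ℝ {v 0, v 1, v 2}
  have hT : IsCompact T := (toFinite _).isCompact_convexHull ℝ
  -- `μH[2]` is not locally finite on `ℝ³`, but its restriction to the triangle is finite.
  have : Fact (μH[2] T < ∞) := ⟨hausdorffMeasure_triangle_lt_top v⟩
  have hint : Continuous fun y : Fin 3 → ℝ => ∫ x in T,
      |y 0 + ⟪triGrad (v 0) (v 1) (v 2) (y 0) (y 1) (y 2), x - v 0⟫| ∂(μH[2].restrict T) :=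
    continuous_parametric_integral_of_continuous (by fun_prop) hT
  simp only [Measure.restrict_restrict_of_subset subset_rfl] at hint
  unfold triBV
  fun_prop

lemma triBV_eq_zero {v : Fin 3 → E3} (hv : AffineIndependent ℝ v) {y : Fin 3 → ℝ}
    (h : triBV v y = 0) : y = 0 := by
  have harea := triArea_pos hv
  obtain ⟨hL1, hTV⟩ := (add_eq_zero_iff_of_nonneg (integral_nonneg fun _ => abs_nonneg _)
    (mul_nonneg harea.le (norm_nonneg _))).1 h
  have hG : triGrad (v 0) (v 1) (v 2) (y 0) (y 1) (y 2) = 0 :=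
    norm_eq_zero.1 ((mul_eq_zero.1 hTV).resolve_left harea.ne')
  obtain ⟨h₂, h₃⟩ := inner_triGrad_sub (triU_ne_zero hv) (y 0) (y 1) (y 2)
  rw [hG, inner_zero_left] at h₂ h₃
  have hpos : 0 < μH[2].real (convexHull ℝ {v 0, v 1, v 2}) :=
    ENNReal.toReal_pos hv.hausdorffMeasure_triangle_pos.ne' (hausdorffMeasure_triangle_lt_top v).ne
  rw [hG] at hL1
  simp only [inner_zero_left, add_zero, setIntegral_const, smul_eq_mul] at hL1
  have h₁ : y 0 = 0 := abs_eq_zero.1 ((mul_eq_zero.1 hL1).resolve_left hpos.ne')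
  ext i; fin_cases i <;> simp <;> linarith

variable {N M : ℕ} {p : Fin N → E3} {t : Fin M → Fin 3 → Fin N}

variable (p t) in
def p1BVEnergy (f : Fin N → ℝ) : ℝ :=
  ∑ k, triBV (fun j => p (t k j)) (fun j => f (t k j))

lemma p1BVEnergy_smul (r : ℝ) (f : Fin N → ℝ) :
    p1BVEnergy p t (r • f) = |r| * p1BVEnergy p t f := by
  simp only [p1BVEnergy, Finset.mul_sum, ← triBV_smul]; rfl

lemma continuous_p1BVEnergy : Continuous (p1BVEnergy p t) :=
  continuous_finsetSum _ fun _ _ => (continuous_triBV _).comp (by fun_prop)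

lemma p1BVEnergy_pos (hindep : ∀ k, AffineIndependent ℝ fun j => p (t k j))
    (hsurj : ∀ i, ∃ k j, t k j = i) {f : Fin N → ℝ} (hf : f ≠ 0) : 0 < p1BVEnergy p t f := by
  refine (Finset.sum_nonneg fun k _ => triBV_nonneg _ _).lt_of_ne fun h => hf ?_
  have hk := (Finset.sum_eq_zero_iff_of_nonneg fun k _ => triBV_nonneg _ _).1 h.symm
  ext i
  obtain ⟨k, j, rfl⟩ := hsurj i
  exact congrFun (triBV_eq_zero (hindep k) (hk k (Finset.mem_univ k))) j

end P1BVEnergy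

section Coercive

variable {V : Type*} [NormedAddCommGroup V] [NormedSpace ℝ V] [FiniteDimensional ℝ V]

lemma exists_pos_mul_norm_le {Φ : V → ℝ} (hc : Continuous Φ)
    (hhom : ∀ (r : ℝ) (x : V), 0 < r → Φ (r • x) = r * Φ x) (hpos : ∀ x, x ≠ 0 → 0 < Φ x) :
    ∃ c > 0, ∀ x, c * ‖x‖ ≤ Φ x := by
  have hΦ0 : Φ 0 = 0 := by
    have h2 := hhom 2 0 two_pos
    rw [smul_zero] at h2
    linarith
  rcases subsingleton_or_nontrivial V with _ | _
  · exact ⟨1, one_pos, fun x => by simp [Subsingleton.elim x 0, hΦ0]⟩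
  obtain ⟨x₀, hx₀, hmin⟩ := (isCompact_sphere (0 : V) 1).exists_isMinOn
    (NormedSpace.sphere_nonempty.2 zero_le_one) hc.continuousOn
  rw [mem_sphere_zero_iff_norm] at hx₀
  refine ⟨Φ x₀, hpos x₀ (norm_ne_zero_iff.1 (by simp [hx₀])), fun x => ?_⟩
  rcases eq_or_ne x 0 with rfl | hx
  · simp [hΦ0]
  have hr : 0 < ‖x‖ := norm_pos_iff.2 hx
  have hle : Φ x₀ ≤ ‖x‖⁻¹ * Φ x := by
    rw [← hhom _ _ (inv_pos.2 hr)]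
    exact hmin (by simp [norm_smul, hr.ne'])
  calc Φ x₀ * ‖x‖ ≤ ‖x‖⁻¹ * Φ x * ‖x‖ := by gcongr
    _ = Φ x := by field_simp

theorem Continuous.exists_forall_le_add_of_homogeneous {Φ R : V → ℝ} (hΦ : Continuous Φ)
    (hhom : ∀ (r : ℝ) (x : V), 0 < r → Φ (r • x) = r * Φ x) (hpos : ∀ x, x ≠ 0 → 0 < Φ x)
    (hR : Continuous R) (hRb : BddBelow (range R)) : ∃ x, ∀ y, Φ x + R x ≤ Φ y + R y := by
  obtain ⟨c, hc, hcΦ⟩ := exists_pos_mul_norm_le hΦ hhom hpos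
  obtain ⟨C, hC⟩ := hRb
  exact (hΦ.add hR).exists_forall_le <| tendsto_atTop_mono
    (fun x => add_le_add (hcΦ x) (hC (mem_range_self x)))
    (tendsto_atTop_add_const_right _ C (tendsto_norm_cocompact_atTop.const_mul_atTop hc))

end Coercive

section Varifold

lemma kern_pos (σe σt σf : ℝ) (p q : E3 × E3 × ℝ) : 0 < kern σe σt σf p q := by
  unfold kern; positivity

lemma kern_le_exp_inner (σe σt σf : ℝ) (p q : E3 × E3 × ℝ) :
    kern σe σt σf p q ≤ Real.exp (-(2 * (1 - ⟪p.2.1, q.2.1⟫ ^ 2)) / σt ^ 2) := by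
  have hexp_le_one : ∀ a σ : ℝ, Real.exp (-a ^ 2 / σ ^ 2) ≤ 1 := fun a σ =>
    Real.exp_le_one_iff.2
      (div_nonpos_of_nonpos_of_nonneg (neg_nonpos.2 (sq_nonneg a)) (sq_nonneg σ))
  calc kern σe σt σf p q
      ≤ 1 * Real.exp (-(2 * (1 - ⟪p.2.1, q.2.1⟫ ^ 2)) / σt ^ 2) * 1 := by
        unfold kern; gcongr <;> apply hexp_le_one
    _ = _ := by ring

@[fun_prop]
lemma Continuous.kern {α : Type*} [TopologicalSpace α] (σe σt σf : ℝ) {p q : α → E3 × E3 × ℝ}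
    (hp : Continuous p) (hq : Continuous q) : Continuous fun a => kern σe σt σf (p a) (q a) := by
  unfold _root_.kern; fun_prop

variable (σe σt σf : ℝ) {ι κ : Type*} [Fintype ι] [Fintype κ]

/-- The kernel inner product `⟨μ, ν⟩_W` of the fvarifolds `μ = ∑ a_k δ_{x_k}` and
`ν = ∑ b_l δ_{y_l}`. -/
def varifoldInner (a : ι → ℝ) (x : ι → E3 × E3 × ℝ) (b : κ → ℝ) (y : κ → E3 × E3 × ℝ) : ℝ :=
  ∑ k, ∑ l, a k * b l * kern σe σt σf (x k) (y l)

def varifoldDistSq (a : ι → ℝ) (x : ι → E3 × E3 × ℝ) (b : κ → ℝ) (y : κ → E3 × E3 × ℝ) : ℝ :=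
  varifoldInner σe σt σf a x a x - 2 * varifoldInner σe σt σf a x b y +
    varifoldInner σe σt σf b y b y

lemma abs_varifoldInner_le (a : ι → ℝ) (x : ι → E3 × E3 × ℝ) (b : κ → ℝ)
    (y : κ → E3 × E3 × ℝ) :
    |varifoldInner σe σt σf a x b y| ≤
      ∑ k, ∑ l, |a k| * |b l| * Real.exp (-(2 * (1 - ⟪(x k).2.1, (y l).2.1⟫ ^ 2)) / σt ^ 2) := by
  refine (Finset.abs_sum_le_sum_abs _ _).trans (Finset.sum_le_sum fun k _ =>
    (Finset.abs_sum_le_sum_abs _ _).trans (Finset.sum_le_sum fun l _ => ?_))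
  rw [abs_mul, abs_mul, abs_of_pos (kern_pos ..)]
  gcongr
  exact kern_le_exp_inner ..

lemma exists_abs_varifoldDistSq_le (a : ι → ℝ) (c n : ι → E3) (b : κ → ℝ)
    (y : κ → E3 × E3 × ℝ) :
    ∃ C, ∀ s : ι → ℝ, |varifoldDistSq σe σt σf a (fun k => (c k, n k, s k)) b y| ≤ C := by
  refine ⟨∑ k, ∑ l, |a k| * |a l| * Real.exp (-(2 * (1 - ⟪n k, n l⟫ ^ 2)) / σt ^ 2) +
      2 * ∑ k, ∑ l, |a k| * |b l| * Real.exp (-(2 * (1 - ⟪n k, (y l).2.1⟫ ^ 2)) / σt ^ 2) +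
      |varifoldInner σe σt σf b y b y|, fun s => ?_⟩
  have hxx := abs_varifoldInner_le σe σt σf a (fun k => (c k, n k, s k)) a
    fun k => (c k, n k, s k)
  have hxy := abs_varifoldInner_le σe σt σf a (fun k => (c k, n k, s k)) b y
  refine (abs_add_le _ _).trans (add_le_add_left ((abs_sub _ _).trans (add_le_add hxx ?_)) _)
  rw [abs_mul, abs_two]
  gcongr

lemma continuous_varifoldDistSq (a : ι → ℝ) (c n : ι → E3) (b : κ → ℝ)
    (y : κ → E3 × E3 × ℝ) :
    Continuous fun s : ι → ℝ => varifoldDistSq σe σt σf a (fun k => (c k, n k, s k)) b y := by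
  unfold varifoldDistSq varifoldInner; fun_prop

end Varifold

theorem discrete_BV_energy_attains_min_general
    (N M P : ℕ)
    (p : Fin N → E3) (t : Fin M → Fin 3 → Fin N)
    (hindep : ∀ k, AffineIndependent ℝ (fun j : Fin 3 => p (t k j)))
    (hsurj : ∀ i : Fin N, ∃ k j, t k j = i)
    (w : Fin P → E3) (m : Fin P → E3)
    (b : Fin P → ℝ) (g : Fin P → ℝ)
    (σe σt σf γW : ℝ)
    (E : (Fin N → ℝ) → ℝ)
    (hE : ∀ f : Fin N → ℝ,
      E f =
        (∑ k, ∫ x in convexHull ℝ ({p (t k 0), p (t k 1), p (t k 2)} : Set E3),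
            |f (t k 0) +
              ⟪triGrad (p (t k 0)) (p (t k 1)) (p (t k 2))
                  (f (t k 0)) (f (t k 1)) (f (t k 2)),
                x - p (t k 0)⟫| ∂μH[2])
        + (∑ k, triArea (p (t k 0)) (p (t k 1)) (p (t k 2)) *
            ‖triGrad (p (t k 0)) (p (t k 1)) (p (t k 2))
                (f (t k 0)) (f (t k 1)) (f (t k 2))‖)
        + γW / 2 *
          ((∑ k, ∑ l,
              triArea (p (t k 0)) (p (t k 1)) (p (t k 2)) *
                triArea (p (t l 0)) (p (t l 1)) (p (t l 2)) *
                kern σe σt σf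
                  (triCentroid (p (t k 0)) (p (t k 1)) (p (t k 2)),
                    triNormal (p (t k 0)) (p (t k 1)) (p (t k 2)),
                    (f (t k 0) + f (t k 1) + f (t k 2)) / 3)
                  (triCentroid (p (t l 0)) (p (t l 1)) (p (t l 2)),
                    triNormal (p (t l 0)) (p (t l 1)) (p (t l 2)),
                    (f (t l 0) + f (t l 1) + f (t l 2)) / 3))
            - 2 * ∑ k, ∑ j,
                triArea (p (t k 0)) (p (t k 1)) (p (t k 2)) * b j *
                  kern σe σt σf
                    (triCentroid (p (t k 0)) (p (t k 1)) (p (t k 2)),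
                      triNormal (p (t k 0)) (p (t k 1)) (p (t k 2)),
                      (f (t k 0) + f (t k 1) + f (t k 2)) / 3)
                    (w j, m j, g j)
            + ∑ j, ∑ j', b j * b j' *
                kern σe σt σf (w j, m j, g j) (w j', m j', g j'))) :
    ∃ fstar : Fin N → ℝ, ∀ f : Fin N → ℝ, E fstar ≤ E f := by
  set a : Fin M → ℝ := fun k => triArea (p (t k 0)) (p (t k 1)) (p (t k 2))
  set c : Fin M → E3 := fun k => triCentroid (p (t k 0)) (p (t k 1)) (p (t k 2))
  set n : Fin M → E3 := fun k => triNormal (p (t k 0)) (p (t k 1)) (p (t k 2))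
  set y : Fin P → E3 × E3 × ℝ := fun j => (w j, m j, g j)
  set R : (Fin N → ℝ) → ℝ := fun f => γW / 2 *
    varifoldDistSq σe σt σf a (fun k => (c k, n k, (f (t k 0) + f (t k 1) + f (t k 2)) / 3)) b y
  have hER : E = fun f => p1BVEnergy p t f + R f := by
    funext f
    rw [hE, p1BVEnergy]
    simp only [triBV, Finset.sum_add_distrib]
    rfl
  have hRc : Continuous R := continuous_const.mul
    ((continuous_varifoldDistSq σe σt σf a c n b y).comp (by fun_prop))
  obtain ⟨C, hC⟩ := exists_abs_varifoldDistSq_le σe σt σf a c n b y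
  have hRb : BddBelow (range R) := ⟨-(|γW / 2| * C), forall_mem_range.2 fun f =>
    neg_le_of_abs_le ((abs_mul _ _).trans_le (mul_le_mul_of_nonneg_left (hC _) (abs_nonneg _)))⟩
  rw [hER]
  exact continuous_p1BVEnergy.exists_forall_le_add_of_homogeneous
    (fun r f hr => by rw [p1BVEnergy_smul, abs_of_pos hr])
    (fun f => p1BVEnergy_pos hindep hsurj) hRc hRb

/-- The discrete `BV` matching energy (`P₁` finite elements: exact `L¹` norm of the
affine interpolant, total variation of the interpolant and a discrete fvarifold
attachment term) attains its infimum over signals `f : Fin N → ℝ`. -/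
theorem discrete_BV_energy_attains_min
    (N M P : ℕ) (hN : 0 < N) (hM : 0 < M) (hP : 0 < P)
    (p : Fin N → E3) (t : Fin M → Fin 3 → Fin N)
    (hindep : ∀ k, AffineIndependent ℝ (fun j : Fin 3 => p (t k j)))
    (hsurj : ∀ i : Fin N, ∃ k j, t k j = i)
    (w : Fin P → E3) (m : Fin P → E3) (hm : ∀ j, ‖m j‖ = 1)
    (b : Fin P → ℝ) (hb : ∀ j, 0 < b j) (g : Fin P → ℝ)
    (σe σt σf γW : ℝ) (hσe : 0 < σe) (hσt : 0 < σt) (hσf : 0 < σf) (hγW : 0 < γW)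
    (E : (Fin N → ℝ) → ℝ)
    (hE : ∀ f : Fin N → ℝ,
      E f =
        (∑ k, ∫ x in convexHull ℝ ({p (t k 0), p (t k 1), p (t k 2)} : Set E3),
            |f (t k 0) +
              ⟪triGrad (p (t k 0)) (p (t k 1)) (p (t k 2))
                  (f (t k 0)) (f (t k 1)) (f (t k 2)),
                x - p (t k 0)⟫| ∂μH[2])
        + (∑ k, triArea (p (t k 0)) (p (t k 1)) (p (t k 2)) *
            ‖triGrad (p (t k 0)) (p (t k 1)) (p (t k 2))
                (f (t k 0)) (f (t k 1)) (f (t k 2))‖)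
        + γW / 2 *
          ((∑ k, ∑ l,
              triArea (p (t k 0)) (p (t k 1)) (p (t k 2)) *
                triArea (p (t l 0)) (p (t l 1)) (p (t l 2)) *
                kern σe σt σf
                  (triCentroid (p (t k 0)) (p (t k 1)) (p (t k 2)),
                    triNormal (p (t k 0)) (p (t k 1)) (p (t k 2)),
                    (f (t k 0) + f (t k 1) + f (t k 2)) / 3)
                  (triCentroid (p (t l 0)) (p (t l 1)) (p (t l 2)),
                    triNormal (p (t l 0)) (p (t l 1)) (p (t l 2)),
                    (f (t l 0) + f (t l 1) + f (t l 2)) / 3))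
            - 2 * ∑ k, ∑ j,
                triArea (p (t k 0)) (p (t k 1)) (p (t k 2)) * b j *
                  kern σe σt σf
                    (triCentroid (p (t k 0)) (p (t k 1)) (p (t k 2)),
                      triNormal (p (t k 0)) (p (t k 1)) (p (t k 2)),
                      (f (t k 0) + f (t k 1) + f (t k 2)) / 3)
                    (w j, m j, g j)
            + ∑ j, ∑ j', b j * b j' *
                kern σe σt σf (w j, m j, g j) (w j', m j', g j'))) :
    ∃ fstar : Fin N → ℝ, ∀ f : Fin N → ℝ, E fstar ≤ E f :=
  discrete_BV_energy_attains_min_general N M P p t hindep hsurj w m b g σe σt σf γW E hE
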